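/- Let R be a ring whose regular elements C form a left Ore set such that Q = C^{-1}R is left Noetherian, and let n be the prime radical of R. Then C^{-1}n is an ideal of Q equal to the prime radical n_Q of Q, and (C^{-1}n)^i = C^{-1}(n^i) for all i ≥ 1; consequently the nilpotency degrees of n and n_Q coincide and are finite. -/

import Mathlib

/-- A (two-sided) prime ideal of a possibly noncommutative ring: a proper two-sided
ideal `P` such that `a R b ⊆ P` implies `a ∈ P` or `b ∈ P`. -/
def IsPrimeTwoSided {R : Type*} [Ring R] (P : Ideal R) : Prop :=
  (∀ a ∈ P, ∀ r : R, a * r ∈ P) ∧ P ≠ ⊤ ∧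
    ∀ a b : R, (∀ r : R, a * r * b ∈ P) → a ∈ P ∨ b ∈ P

/-- The prime radical (intersection of all two-sided prime ideals) of a ring. -/
def primeRadical (R : Type*) [Ring R] : Ideal R :=
  sInf {P : Ideal R | IsPrimeTwoSided P}

/-- An ideal `n` is nilpotent if, for some `k ≥ 1`, every product of `k` elements of
`n` vanishes. -/
def IdealIsNilpotent {R : Type*} [Ring R] (n : Ideal R) : Prop :=
  ∃ k : ℕ, 0 < k ∧ ∀ l : List R, (∀ x ∈ l, x ∈ n) → l.length = k → l.prod = 0

/-- Powers of a two-sided ideal in a possibly noncommutative ring: `idealPow n 0 = ⊤`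
and `idealPow n (k+1)` is the left ideal generated by products `a * b` with `a ∈ n`,
`b ∈ idealPow n k`. -/
def idealPow {R : Type*} [Ring R] (n : Ideal R) : ℕ → Ideal R
  | 0 => ⊤
  | k + 1 => Ideal.span {x : R | ∃ a ∈ n, ∃ b ∈ idealPow n k, x = a * b}

/-!
For a two-sided ideal `A` of `R` write `C⁻¹A = {(φ c)⁻¹ φ a | c regular, a ∈ A}`, a left ideal
of `Q`. The key point is that right multiplication by `(φ c)⁻¹` maps `C⁻¹A` into itself: since
`A c ⊆ A`, it is an injective map with `C⁻¹A ⊆ C⁻¹A (φ c)⁻¹`, and the ascending chain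
`C⁻¹A ⊆ C⁻¹A (φ c)⁻¹ ⊆ C⁻¹A (φ c)⁻² ⊆ ⋯` stabilises because `Q` is left Noetherian.
This gives `C⁻¹(AB) = C⁻¹A · C⁻¹B`, and, applied to `A = {t | t R b ⊆ φ⁻¹P}`, that contractions
of primes of `Q` are prime, so `n ⊆ φ⁻¹(n_Q)`. Noetherian induction shows that every two-sided
ideal of `Q` contains a power of `n_Q` (a maximal counterexample `J` would be prime, because
`aQb ⊆ J` gives `{t | t Q b ⊆ J} · (J + QbQ) ⊆ J`); in particular `n_Q` is nilpotent, hence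
so is `φ⁻¹(n_Q)`, which is therefore contained in `n`. Since `C⁻¹(φ⁻¹J) = J` for every left
ideal `J` of `Q`, we get `n_Q = C⁻¹n` and `n_Q^i = C⁻¹(n^i)`, and `C⁻¹A = 0 ↔ A = 0` by
injectivity of `φ`.
-/

open Ideal

theorem Submodule.map_eq_self_of_le_map {R M : Type*} [Semiring R] [AddCommMonoid M]
    [Module R M] [IsNoetherian R M] {f : M →ₗ[R] M} (hf : Function.Injective f)
    {N : Submodule R M} (hN : N ≤ N.map f) : N.map f = N := by
  have hmono : Monotone fun k => (map f)^[k] N := monotone_nat_of_le_succ fun k => by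
    simpa only [Function.iterate_succ_apply] using
      Monotone.iterate (fun _ _ => Submodule.map_mono) k hN
  obtain ⟨k, hk⟩ := monotone_stabilizes_iff_noetherian.mpr ‹_› ⟨_, hmono⟩
  have hstable : (map f)^[k] N = (map f)^[k + 1] N := hk (k + 1) k.le_succ
  rw [Function.iterate_succ_apply] at hstable
  exact (map_injective_of_injective hf).iterate k hstable.symm

section PrimeRadical

variable {S : Type*} [Ring S]

theorem IsPrimeTwoSided.isTwoSided {P : Ideal S} (hP : IsPrimeTwoSided P) : P.IsTwoSided :=
  ⟨fun b ha => hP.1 _ ha b⟩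

theorem mem_primeRadical {x : S} :
    x ∈ primeRadical S ↔ ∀ P : Ideal S, IsPrimeTwoSided P → x ∈ P :=
  Submodule.mem_sInf

instance : (primeRadical S).IsTwoSided :=
  ⟨fun b ha => mem_primeRadical.mpr fun P hP => hP.1 _ (mem_primeRadical.mp ha P hP) b⟩

instance {I J : Ideal S} [I.IsTwoSided] [J.IsTwoSided] : (I ⊔ J).IsTwoSided :=
  ⟨fun b h => by
    obtain ⟨i, hi, j, hj, rfl⟩ := Submodule.mem_sup.mp h
    rw [add_mul]
    exact Submodule.add_mem_sup (I.mul_mem_right b hi) (J.mul_mem_right b hj)⟩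

theorem mem_colon_span_singleton_iff {J : Ideal S} {a b : S} :
    a ∈ J.colon (span {b} : Set S) ↔ ∀ r, a * r * b ∈ J := by
  simp only [Submodule.mem_colon, SetLike.mem_coe, mem_span_singleton', smul_eq_mul]
  constructor
  · intro h r
    rw [mul_assoc]
    exact h _ ⟨r, rfl⟩
  · rintro h _ ⟨r, rfl⟩
    rw [← mul_assoc]
    exact h r

theorem IsPrimeTwoSided.le_of_pow_le {I P : Ideal S} [I.IsTwoSided] (hP : IsPrimeTwoSided P)
    {m : ℕ} (h : I ^ m ≤ P) : I ≤ P := by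
  induction m with
  | zero =>
    rw [Submodule.pow_zero, one_eq_top, top_le_iff] at h
    exact absurd h hP.2.1
  | succ m ih =>
    by_contra hIP
    obtain ⟨j, hj, hjP⟩ := SetLike.not_le_iff_exists.mp hIP
    refine hIP (ih fun y hy => (hP.2.2 y j fun r => h ?_).resolve_right hjP)
    rw [Submodule.pow_succ]
    exact mul_mem_mul ((I ^ m).mul_mem_right r hy) hj

theorem le_primeRadical_of_pow_eq_bot {I : Ideal S} [I.IsTwoSided] {m : ℕ} (h : I ^ m = ⊥) :
    I ≤ primeRadical S := fun _ hx =>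
  mem_primeRadical.mpr fun _ hP => hP.le_of_pow_le (h ▸ bot_le) hx

theorem exists_lt_lt_mul_le_of_not_isPrimeTwoSided {J : Ideal S} [J.IsTwoSided] (hJ : J ≠ ⊤)
    (hJp : ¬IsPrimeTwoSided J) :
    ∃ A B : Ideal S, A.IsTwoSided ∧ B.IsTwoSided ∧ J < A ∧ J < B ∧ A * B ≤ J := by
  obtain ⟨a, b, hab, haJ, hbJ⟩ : ∃ a b : S, (∀ r, a * r * b ∈ J) ∧ a ∉ J ∧ b ∉ J := by
    by_contra! h
    exact hJp ⟨fun a ha r => J.mul_mem_right r ha, hJ,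
      fun a b hab => or_iff_not_imp_left.mpr (h a b hab)⟩
  have hb : b ∈ span {b} * ⊤ := by
    simpa only [mul_one] using
      mul_mem_mul (mem_span_singleton_self b) (Submodule.mem_top (x := (1 : S)))
  refine ⟨J.colon (span {b} : Set S), J ⊔ span {b} * ⊤, inferInstance, inferInstance,
    lt_of_le_of_ne le_colon fun h => haJ (h ▸ mem_colon_span_singleton_iff.mpr hab),
    lt_of_le_of_ne le_sup_left fun h => hbJ (h ▸ Submodule.mem_sup_right hb), ?_⟩
  have hcolon : J.colon (span {b} : Set S) * span {b} ≤ J :=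
    Ideal.mul_le.mpr fun t ht p hp => Submodule.mem_colon.mp ht p hp
  rw [← Ideal.smul_eq_mul, Submodule.smul_sup, ← Ideal.smul_eq_mul (span {b}),
    ← Submodule.mul_smul, Ideal.smul_eq_mul, Ideal.smul_eq_mul]
  exact sup_le Ideal.mul_le_right ((Ideal.mul_mono_left hcolon).trans Ideal.mul_le_left)

theorem exists_pow_primeRadical_le [IsNoetherianRing S] (J : Ideal S) [J.IsTwoSided] :
    ∃ m : ℕ, primeRadical S ^ m ≤ J := by
  suffices ∀ J : Ideal S, J.IsTwoSided → ∃ m : ℕ, primeRadical S ^ m ≤ J from this J ‹_›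
  intro J
  induction J using WellFoundedGT.induction with
  | _ J ih =>
    intro hJ
    by_cases htop : J = ⊤
    · exact ⟨0, by simp [htop]⟩
    by_cases hprime : IsPrimeTwoSided J
    · exact ⟨1, by rw [Submodule.pow_one]; exact sInf_le hprime⟩
    obtain ⟨A, B, hA, hB, hJA, hJB, hAB⟩ :=
      exists_lt_lt_mul_le_of_not_isPrimeTwoSided htop hprime
    obtain ⟨m, hm⟩ := ih A hJA hA
    obtain ⟨k, hk⟩ := ih B hJB hB
    exact ⟨m + k, by rw [IsTwoSided.pow_add]; exact (Ideal.mul_mono hm hk).trans hAB⟩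

theorem exists_pow_primeRadical_eq_bot (S : Type*) [Ring S] [IsNoetherianRing S] :
    ∃ m : ℕ, primeRadical S ^ m = ⊥ :=
  (exists_pow_primeRadical_le ⊥).imp fun _ => le_bot_iff.mp

theorem idealPow_succ (n : Ideal S) (k : ℕ) : idealPow n (k + 1) = n * idealPow n k :=
  le_antisymm (span_le.mpr <| by rintro _ ⟨a, ha, b, hb, rfl⟩; exact mul_mem_mul ha hb)
    (Ideal.mul_le.mpr fun a ha b hb => subset_span ⟨a, ha, b, hb, rfl⟩)

theorem idealPow_eq_pow (n : Ideal S) [n.IsTwoSided] : ∀ k : ℕ, idealPow n k = n ^ k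
  | 0 => one_eq_top.symm
  | k + 1 => by rw [idealPow_succ, idealPow_eq_pow n k, IsTwoSided.pow_succ]

end PrimeRadical

/-- `φ` exhibits `Q` as the classical left quotient ring `C⁻¹R`, `C` the regular elements. -/
structure IsLeftQuotientRing {R Q : Type*} [Ring R] [Ring Q] (φ : R →+* Q) : Prop where
  ore : ∀ (r c : R), IsRegular c → ∃ c' r' : R, IsRegular c' ∧ c' * r = r' * c
  isUnit : ∀ c : R, IsRegular c → IsUnit (φ c)
  exists_mul_eq : ∀ q : Q, ∃ c r : R, IsRegular c ∧ φ c * q = φ r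

namespace IsLeftQuotientRing

variable {R Q : Type*} [Ring R] [Ring Q] {φ : R →+* Q}

theorem eq_inverse_mul (hφ : IsLeftQuotientRing φ) {c : R} (hc : IsRegular c) {x y : Q}
    (h : φ c * x = y) : x = Ring.inverse (φ c) * y := by
  rw [← h, ← mul_assoc, Ring.inverse_mul_cancel _ (hφ.isUnit c hc), one_mul]

/-- The left ideal `C⁻¹A` of `Q`. -/
def fracIdeal (hφ : IsLeftQuotientRing φ) (A : Ideal R) : Ideal Q where
  carrier := {x | ∃ c a : R, IsRegular c ∧ a ∈ A ∧ φ c * x = φ a}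
  zero_mem' := ⟨1, 0, isRegular_one, A.zero_mem, by simp⟩
  add_mem' := by
    rintro x y ⟨c₁, a₁, hc₁, ha₁, h₁⟩ ⟨c₂, a₂, hc₂, ha₂, h₂⟩
    obtain ⟨c', r', hc', h⟩ := hφ.ore c₁ c₂ hc₂
    refine ⟨c' * c₁, c' * a₁ + r' * a₂, hc'.mul hc₁,
      add_mem (A.mul_mem_left c' ha₁) (A.mul_mem_left r' ha₂), ?_⟩
    calc φ (c' * c₁) * (x + y) = φ c' * (φ c₁ * x) + φ (r' * c₂) * y := by
          rw [← h, map_mul, mul_add, mul_assoc]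
      _ = φ (c' * a₁ + r' * a₂) := by simp only [map_add, map_mul, mul_assoc, h₁, h₂]
  smul_mem' := by
    rintro q x ⟨c, a, hc, ha, hx⟩
    obtain ⟨d, r, hd, hr⟩ := hφ.exists_mul_eq (q * Ring.inverse (φ c))
    refine ⟨d, r * a, hd, A.mul_mem_left r ha, ?_⟩
    rw [smul_eq_mul, hφ.eq_inverse_mul hc hx, map_mul, ← hr]
    simp only [mul_assoc]

theorem mem_fracIdeal (hφ : IsLeftQuotientRing φ) {A : Ideal R} {x : Q} :
    x ∈ hφ.fracIdeal A ↔ ∃ c a : R, IsRegular c ∧ a ∈ A ∧ φ c * x = φ a :=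
  Iff.rfl

theorem map_mem_fracIdeal (hφ : IsLeftQuotientRing φ) {A : Ideal R} {a : R} (ha : a ∈ A) :
    φ a ∈ hφ.fracIdeal A :=
  ⟨1, a, isRegular_one, ha, by rw [map_one, one_mul]⟩

theorem fracIdeal_le_iff (hφ : IsLeftQuotientRing φ) {A : Ideal R} {J : Ideal Q} :
    hφ.fracIdeal A ≤ J ↔ A ≤ J.comap φ := by
  refine ⟨fun h a ha => h (hφ.map_mem_fracIdeal ha), fun h x ⟨c, a, hc, ha, hx⟩ => ?_⟩
  rw [hφ.eq_inverse_mul hc hx]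
  exact J.mul_mem_left _ (h ha)

theorem fracIdeal_comap (hφ : IsLeftQuotientRing φ) (J : Ideal Q) :
    hφ.fracIdeal (J.comap φ) = J := by
  refine le_antisymm (hφ.fracIdeal_le_iff.mpr le_rfl) fun x hx => ?_
  obtain ⟨c, r, hc, hr⟩ := hφ.exists_mul_eq x
  exact ⟨c, r, hc, show φ r ∈ J from hr ▸ J.mul_mem_left _ hx, hr⟩

theorem fracIdeal_top (hφ : IsLeftQuotientRing φ) : hφ.fracIdeal ⊤ = ⊤ := by
  rw [← comap_top (f := φ), hφ.fracIdeal_comap]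

theorem fracIdeal_eq_bot_iff (hφ : IsLeftQuotientRing φ) (hinj : Function.Injective φ)
    {A : Ideal R} : hφ.fracIdeal A = ⊥ ↔ A = ⊥ := by
  rw [← le_bot_iff, hφ.fracIdeal_le_iff, comap_bot_of_injective φ hinj, le_bot_iff]

theorem mul_inverse_mem_fracIdeal [IsNoetherianRing Q] (hφ : IsLeftQuotientRing φ) {A : Ideal R}
    [A.IsTwoSided] {c : R} (hc : IsRegular c) {x : Q} (hx : x ∈ hφ.fracIdeal A) :
    x * Ring.inverse (φ c) ∈ hφ.fracIdeal A := by
  have hu := hφ.isUnit c hc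
  let f : Q →ₗ[Q] Q := LinearMap.toSpanSingleton Q Q (Ring.inverse (φ c))
  have hf : Function.Injective f := fun y z h => hu.ringInverse.mul_right_cancel h
  have hle : hφ.fracIdeal A ≤ Submodule.map f (hφ.fracIdeal A) := fun y ⟨d, a, hd, ha, hy⟩ =>
    Submodule.mem_map.mpr ⟨y * φ c,
      hφ.mem_fracIdeal.mpr ⟨d, a * c, hd, A.mul_mem_right c ha,
        by rw [map_mul, ← mul_assoc, hy]⟩,
      show y * φ c * Ring.inverse (φ c) = y by
        rw [mul_assoc, Ring.mul_inverse_cancel _ hu, mul_one]⟩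
  rw [← Submodule.map_eq_self_of_le_map hf hle]
  exact Submodule.mem_map_of_mem hx

theorem fracIdeal_mul [IsNoetherianRing Q] (hφ : IsLeftQuotientRing φ) (A B : Ideal R)
    [A.IsTwoSided] : hφ.fracIdeal (A * B) = hφ.fracIdeal A * hφ.fracIdeal B := by
  refine le_antisymm (hφ.fracIdeal_le_iff.mpr <| Ideal.mul_le.mpr fun a ha b hb => ?_)
    (Ideal.mul_le.mpr ?_)
  · rw [mem_comap, map_mul]
    exact mul_mem_mul (hφ.map_mem_fracIdeal ha) (hφ.map_mem_fracIdeal hb)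
  · rintro x hx y ⟨d, b, hd, hb, hy⟩
    obtain ⟨e, a, he, ha, hxd⟩ := hφ.mul_inverse_mem_fracIdeal hd hx
    refine ⟨e, a * b, he, mul_mem_mul ha hb, ?_⟩
    rw [hφ.eq_inverse_mul hd hy, map_mul, ← hxd]
    simp only [mul_assoc]

theorem fracIdeal_pow [IsNoetherianRing Q] (hφ : IsLeftQuotientRing φ) (A : Ideal R)
    [A.IsTwoSided] : ∀ n : ℕ, hφ.fracIdeal (A ^ n) = hφ.fracIdeal A ^ n
  | 0 => by
    rw [Submodule.pow_zero, Submodule.pow_zero, one_eq_top, one_eq_top, hφ.fracIdeal_top]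
  | n + 1 => by
    rw [Submodule.pow_succ, Submodule.pow_succ, hφ.fracIdeal_mul, fracIdeal_pow hφ A n]

theorem isPrimeTwoSided_comap [IsNoetherianRing Q] (hφ : IsLeftQuotientRing φ) {P : Ideal Q}
    (hP : IsPrimeTwoSided P) : IsPrimeTwoSided (P.comap φ) := by
  have := hP.isTwoSided
  refine ⟨fun a ha r => (P.comap φ).mul_mem_right r ha, comap_ne_top φ hP.2.1,
    fun a b hab => hP.2.2 (φ a) (φ b) fun q => ?_⟩
  obtain ⟨d, r, hd, hq⟩ := hφ.exists_mul_eq q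
  obtain ⟨e, t, he, ht, hte⟩ := hφ.mul_inverse_mem_fracIdeal hd
    (hφ.map_mem_fracIdeal (mem_colon_span_singleton_iff.mpr hab))
  rw [← P.unit_mul_mem_iff_mem (hφ.isUnit e he), hφ.eq_inverse_mul hd hq]
  have htrb : φ (t * r * b) ∈ P := mem_colon_span_singleton_iff.mp ht r
  rw [map_mul, map_mul, ← hte] at htrb
  simpa only [mul_assoc] using htrb

theorem comap_primeRadical [IsNoetherianRing Q] (hφ : IsLeftQuotientRing φ)
    (hinj : Function.Injective φ) :
    (primeRadical Q).comap φ = primeRadical R := by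
  refine le_antisymm ?_ fun a ha => mem_primeRadical.mpr fun P hP =>
    mem_primeRadical.mp ha (P.comap φ) (hφ.isPrimeTwoSided_comap hP)
  obtain ⟨m, hm⟩ := exists_pow_primeRadical_eq_bot Q
  refine le_primeRadical_of_pow_eq_bot (m := m) ?_
  rw [← hφ.fracIdeal_eq_bot_iff hinj, hφ.fracIdeal_pow, fracIdeal_comap, hm]

end IsLeftQuotientRing

/-- Let `R` be a ring whose regular elements `C` form a left Ore set
such that `Q = C⁻¹R` is left Noetherian, and let `n` be the prime radical of `R`. Then
`C⁻¹n` is an ideal of `Q` equal to the prime radical `n_Q` of `Q` (i.e. `n_Q` consists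
exactly of the fractions `(φ c)⁻¹ (φ a)` with `c` regular and `a ∈ n`), and
`(C⁻¹n)^i = C⁻¹(n^i)` for all `i ≥ 1`; consequently the nilpotency degrees of `n` and
`n_Q` coincide and are finite. -/
theorem stmt16 {R Q : Type*} [Ring R] [Ring Q]
    (hOre : ∀ (r c : R), IsRegular c → ∃ c' r' : R, IsRegular c' ∧ c' * r = r' * c)
    (φ : R →+* Q) (hinj : Function.Injective φ)
    (hunit : ∀ c : R, IsRegular c → IsUnit (φ c))
    (hfrac : ∀ q : Q, ∃ c r : R, IsRegular c ∧ φ c * q = φ r)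
    [IsNoetherianRing Q] :
    (∀ q : Q, q ∈ primeRadical Q ↔
      ∃ c a : R, IsRegular c ∧ a ∈ primeRadical R ∧ φ c * q = φ a) ∧
    (∀ i : ℕ, 1 ≤ i → ∀ q : Q, q ∈ idealPow (primeRadical Q) i ↔
      ∃ c a : R, IsRegular c ∧ a ∈ idealPow (primeRadical R) i ∧ φ c * q = φ a) ∧
    (∀ i : ℕ, idealPow (primeRadical R) i = ⊥ ↔ idealPow (primeRadical Q) i = ⊥) ∧
    (∃ k : ℕ, idealPow (primeRadical R) k = ⊥) := by
  have hφ : IsLeftQuotientRing φ := ⟨hOre, hunit, hfrac⟩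
  have hrad : primeRadical Q = hφ.fracIdeal (primeRadical R) := by
    rw [← hφ.comap_primeRadical hinj, hφ.fracIdeal_comap]
  have hpow (i : ℕ) :
      idealPow (primeRadical Q) i = hφ.fracIdeal (idealPow (primeRadical R) i) := by
    rw [idealPow_eq_pow, idealPow_eq_pow, hφ.fracIdeal_pow, hrad]
  obtain ⟨k, hk⟩ := exists_pow_primeRadical_eq_bot Q
  refine ⟨fun q => by rw [hrad, hφ.mem_fracIdeal], fun i _ q => by rw [hpow, hφ.mem_fracIdeal],
    fun i => by rw [hpow, hφ.fracIdeal_eq_bot_iff hinj], k, ?_⟩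
  rw [← hφ.fracIdeal_eq_bot_iff hinj, ← hpow, idealPow_eq_pow, hk]
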